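/- Let A be a finitely generated commutative ring (finitely generated as a ℤ-algebra) and 𝔐 a maximal ideal of A. Then the residue field A/𝔐 is finite. -/

import Mathlib

/-!
Zariski's lemma over the Jacobson ring `ℤ` makes `A ⧸ 𝔐` a finitely generated `ℤ`-module.
It is then integral over `ℤ`, so its characteristic `p` is nonzero (otherwise `ℤ` would embed
into it and, as an integral subring of a field, be a field), and a finitely generated abelian group
killed by `p` is finite.
-/

open Ideal

theorem isJacobsonRing_of_jacobson_bot_eq_bot {R : Type*} [CommRing R] [Ring.DimensionLEOne R]
    (h : (⊥ : Ideal R).jacobson = ⊥) : IsJacobsonRing R := by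
  refine isJacobsonRing_iff_prime_eq.mpr fun P hP => ?_
  rcases eq_or_ne P ⊥ with rfl | hP₀
  · exact h
  · have := hP.isMaximal hP₀
    exact jacobson_eq_self_of_isMaximal

theorem Int.jacobson_bot : (⊥ : Ideal ℤ).jacobson = ⊥ := by
  refine le_antisymm (fun x hx => ?_) le_jacobson
  -- `x ^ 2 + 1` is a unit, i.e. `±1`, only for `x = 0`.
  have hunit : IsUnit (x * x + 1) := mem_jacobson_bot.mp hx x
  have hsq : x * x = 0 := by
    rcases Int.isUnit_iff.mp hunit with h | h <;> nlinarith [mul_self_nonneg x]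
  exact mem_bot.mpr (mul_self_eq_zero.mp hsq)

instance Int.isJacobsonRing : IsJacobsonRing ℤ :=
  isJacobsonRing_of_jacobson_bot_eq_bot Int.jacobson_bot

theorem ringChar_ne_zero_of_isIntegral_int (K : Type*) [Field K] [Algebra.IsIntegral ℤ K] :
    ringChar K ≠ 0 := by
  intro h
  have : CharP K 0 := h ▸ ringChar.charP K
  have : CharZero K := CharP.charP_to_charZero K
  exact Int.not_isField <|
    isField_of_isIntegral_of_isField (algebraMap ℤ K).injective_int (Field.toIsField K)

theorem isTorsion_int_of_ringChar_ne_zero (R : Type*) [Ring R] (h : ringChar R ≠ 0) :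
    Module.IsTorsion ℤ R := fun {x} =>
  ⟨⟨ringChar R, mem_nonZeroDivisors_of_ne_zero (Int.natCast_ne_zero.mpr h)⟩, by
    simp [zsmul_eq_mul]⟩

theorem finite_of_moduleFinite_int (K : Type*) [Field K] [Module.Finite ℤ K] : Finite K :=
  Module.finite_of_fg_torsion K <|
    isTorsion_int_of_ringChar_ne_zero K (ringChar_ne_zero_of_isIntegral_int K)

/-- The residue field of a maximal ideal of a finitely generated commutative ring
(as a ℤ-algebra) is finite. -/
theorem finite_residueField_of_finiteType
    (A : Type*) [CommRing A] [Algebra.FiniteType ℤ A]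
    (𝔐 : Ideal A) (h : 𝔐.IsMaximal) :
    Finite (A ⧸ 𝔐) := by
  let := Quotient.field 𝔐
  have : Module.Finite ℤ (A ⧸ 𝔐) := finite_of_finite_type_of_isJacobsonRing ℤ (A ⧸ 𝔐)
  exact finite_of_moduleFinite_int (A ⧸ 𝔐)
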